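/- For every n ≥ 2, the Parikh vectors (2^{n-1} + 1, 2^{n-1} − 1), (2^{n-1}, 2^{n-1}), and (2^{n-1} − 1, 2^{n-1} + 1) all occur as Parikh vectors of length-2^n factors of the paperfolding word. -/

import Mathlib

/-- letter of the ordinary paperfolding word at position `m` (positions start at 1):
writing `m = k * 2^j` with `k` odd, the letter is `0` if `k ≡ 1 (mod 4)` and `1` otherwise. -/
def pf (m : ℕ) : ℕ := if (m / 2 ^ (padicValNat 2 m)) % 4 = 1 then 0 else 1

/-- the length-`n` factor of `w` starting at position `i`. -/
def factorAt (w : ℕ → ℕ) (i n : ℕ) : List ℕ := (List.range n).map (fun j => w (i + j))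

/-- `u` is a factor of the 1-indexed infinite word `w`. -/
def IsFactor (w : ℕ → ℕ) (u : List ℕ) : Prop := ∃ i ≥ 1, u = factorAt w i u.length

/-!
Since `pf (2m) = pf m` while the odd positions `4k+1, 4k+3` carry `0, 1`, the window of `pf` of
length `4L` starting after position `4a` contains exactly `L` more ones than the window of length
`2L` starting after `2a`. Iterating, the windows of length `2^n` starting after `0`, `2^n` and
`5·2^(n-1)` are reduced to `pf 1 pf 2 = 00`, `pf 3 pf 4 = 10` and `pf 11 ⋯ pf 14 = 1101`, and their
numbers of ones come out as `2^(n-1) - 1`, `2^(n-1)` and `2^(n-1) + 1`.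
-/

@[simp]
lemma length_factorAt (w : ℕ → ℕ) (i n : ℕ) : (factorAt w i n).length = n := by
  simp [factorAt]

lemma factorAt_add (w : ℕ → ℕ) (i m n : ℕ) :
    factorAt w i (m + n) = factorAt w i m ++ factorAt w (i + m) n := by
  simp [factorAt, List.range_add, Function.comp_def, add_assoc]

lemma isFactor_factorAt (w : ℕ → ℕ) {i : ℕ} (hi : 1 ≤ i) (n : ℕ) :
    IsFactor w (factorAt w i n) :=
  ⟨i, hi, by rw [length_factorAt]⟩

lemma count_zero_add_count_one {u : List ℕ} (hu : ∀ x ∈ u, x ≤ 1) :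
    u.count 0 + u.count 1 = u.length := by
  induction u with
  | nil => rfl
  | cons a u ih =>
    simp only [List.forall_mem_cons] at hu
    obtain ⟨ha, hu⟩ := hu
    have := ih hu
    interval_cases a <;>
      simp only [List.count_cons_self, List.count_cons_of_ne, List.length_cons, ne_eq,
        zero_ne_one, one_ne_zero, not_false_eq_true] <;> omega

lemma pf_le_one (m : ℕ) : pf m ≤ 1 := by
  unfold pf; split <;> omega

lemma pf_two_mul (m : ℕ) : pf (2 * m) = pf m := by
  rcases eq_or_ne m 0 with rfl | hm
  · rfl
  unfold pf
  rw [padicValNat.mul two_ne_zero hm, padicValNat.self one_lt_two, pow_add, pow_one,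
    Nat.mul_div_mul_left _ _ two_pos]

lemma pf_of_mod_two_eq_zero {m : ℕ} (hm : m % 2 = 0) : pf m = pf (m / 2) := by
  obtain ⟨k, rfl⟩ : ∃ k, m = 2 * k := ⟨m / 2, by omega⟩
  rw [pf_two_mul, Nat.mul_div_cancel_left _ two_pos]

lemma pf_of_mod_two_eq_one {m : ℕ} (hm : m % 2 = 1) : pf m = if m % 4 = 1 then 0 else 1 := by
  rw [pf, padicValNat.eq_zero_of_not_dvd (by omega), pow_zero, Nat.div_one]

lemma pf_four_mul_add_one (k : ℕ) : pf (4 * k + 1) = 0 := by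
  rw [pf_of_mod_two_eq_one (by omega), if_pos (by omega)]

lemma pf_four_mul_add_three (k : ℕ) : pf (4 * k + 3) = 1 := by
  rw [pf_of_mod_two_eq_one (by omega), if_neg (by omega)]

lemma count_one_factorAt_four_mul_add_one_four (b : ℕ) :
    (factorAt pf (4 * b + 1) 4).count 1 = (factorAt pf (2 * b + 1) 2).count 1 + 1 := by
  have h4 : factorAt pf (4 * b + 1) 4 =
      [pf (4 * b + 1), pf (2 * (2 * b + 1)), pf (4 * b + 3), pf (2 * (2 * b + 2))] := by
    simp only [factorAt, List.range_succ, List.range_zero, List.nil_append, List.cons_append,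
      List.map_cons, add_zero, List.map_nil, List.cons.injEq, and_true, true_and]
    exact ⟨congrArg pf (by ring), congrArg pf (by ring)⟩
  have h2 : factorAt pf (2 * b + 1) 2 = [pf (2 * b + 1), pf (2 * b + 2)] := by
    simp [factorAt, List.range_succ]
  rw [h4, h2, pf_two_mul, pf_two_mul, pf_four_mul_add_one, pf_four_mul_add_three]
  simp only [List.count_cons, List.count_nil, beq_iff_eq, zero_ne_one, if_false, if_true]
  omega

lemma count_one_factorAt_four_mul (a L : ℕ) :
    (factorAt pf (4 * a + 1) (4 * L)).count 1 = (factorAt pf (2 * a + 1) (2 * L)).count 1 + L := by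
  induction L with
  | zero => rfl
  | succ L ih =>
    rw [mul_add_one, mul_add_one, factorAt_add, factorAt_add, List.count_append,
      List.count_append, ih, show 4 * a + 1 + 4 * L = 4 * (a + L) + 1 by ring,
      show 2 * a + 1 + 2 * L = 2 * (a + L) + 1 by ring, count_one_factorAt_four_mul_add_one_four]
    ring

lemma count_one_factorAt_two_pow_mul (j a L : ℕ) :
    (factorAt pf (2 ^ (j + 1) * a + 1) (2 ^ (j + 1) * L)).count 1 + L =
      (factorAt pf (2 * a + 1) (2 * L)).count 1 + 2 ^ j * L := by
  induction j with
  | zero => simp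
  | succ j ih =>
    have h := count_one_factorAt_four_mul (2 ^ j * a) (2 ^ j * L)
    rw [← mul_assoc 2, ← mul_assoc 2, ← pow_succ'] at h
    have hL : 2 ^ (j + 1) * L = 2 * (2 ^ j * L) := by ring
    rw [show 2 ^ (j + 1 + 1) = 4 * 2 ^ j by ring, mul_assoc, mul_assoc, h]
    omega

lemma exists_factor_parikh {i L p q : ℕ} (hi : 1 ≤ i) (hL : p + q = L)
    (hq : (factorAt pf i L).count 1 = q) :
    ∃ u : List ℕ, IsFactor pf u ∧ u.length = L ∧ (u.count 0, u.count 1) = (p, q) := by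
  refine ⟨factorAt pf i L, isFactor_factorAt pf hi L, length_factorAt pf i L, ?_⟩
  have hbin : ∀ x ∈ factorAt pf i L, x ≤ 1 := by
    simp only [factorAt, List.mem_map]
    rintro _ ⟨j, -, rfl⟩
    exact pf_le_one _
  have h01 := count_zero_add_count_one hbin
  rw [length_factorAt] at h01
  ext <;> simp only <;> omega

/-- For `n ≥ 2`, the Parikh vectors `(2^(n-1)+1, 2^(n-1)-1)`, `(2^(n-1), 2^(n-1))` and
`(2^(n-1)-1, 2^(n-1)+1)` all occur among factors of length `2^n` of the paperfolding word. -/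
theorem paperfolding_occurring_parikh_vectors (n : ℕ) (hn : 2 ≤ n) :
    (∃ u : List ℕ, IsFactor pf u ∧ u.length = 2 ^ n ∧
      (u.count 0, u.count 1) = (2 ^ (n - 1) + 1, 2 ^ (n - 1) - 1)) ∧
    (∃ u : List ℕ, IsFactor pf u ∧ u.length = 2 ^ n ∧
      (u.count 0, u.count 1) = (2 ^ (n - 1), 2 ^ (n - 1))) ∧
    (∃ u : List ℕ, IsFactor pf u ∧ u.length = 2 ^ n ∧
      (u.count 0, u.count 1) = (2 ^ (n - 1) - 1, 2 ^ (n - 1) + 1)) := by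
  obtain ⟨m, rfl⟩ : ∃ m, n = m + 2 := ⟨n - 2, by omega⟩
  rw [show m + 2 - 1 = m + 1 by omega]
  have hpow : 2 ^ (m + 2) = 2 * 2 ^ (m + 1) := by ring
  have hpos : 1 ≤ 2 ^ (m + 1) := Nat.one_le_two_pow
  have hprefix : (factorAt pf 1 (2 ^ (m + 2))).count 1 + 1 = 2 ^ (m + 1) := by
    have h := count_one_factorAt_two_pow_mul (m + 1) 0 1
    have h12 : (factorAt pf 1 2).count 1 = 0 := by
      simp [factorAt, List.range_succ, pf_of_mod_two_eq_zero, pf_of_mod_two_eq_one]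
    simpa [h12] using h
  have hsecond : (factorAt pf (2 ^ (m + 2) + 1) (2 ^ (m + 2))).count 1 = 2 ^ (m + 1) := by
    have h := count_one_factorAt_two_pow_mul (m + 1) 1 1
    have h32 : (factorAt pf 3 2).count 1 = 1 := by
      simp [factorAt, List.range_succ, pf_of_mod_two_eq_zero, pf_of_mod_two_eq_one]
    simp only [mul_one, h32, add_comm 1] at h
    exact Nat.add_right_cancel h
  have hthird : (factorAt pf (5 * 2 ^ (m + 1) + 1) (2 ^ (m + 2))).count 1 = 2 ^ (m + 1) + 1 := by
    have h := count_one_factorAt_two_pow_mul m 5 2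
    have h114 : (factorAt pf 11 4).count 1 = 3 := by
      simp [factorAt, List.range_succ, pf_of_mod_two_eq_zero, pf_of_mod_two_eq_one]
    rw [h114, mul_comm, show 2 ^ (m + 1) * 2 = 2 ^ (m + 2) by ring] at h
    rw [pow_succ] at h ⊢
    omega
  exact ⟨exists_factor_parikh le_rfl (by omega) (by omega),
    exists_factor_parikh (by omega) (by omega) hsecond,
    exists_factor_parikh (by omega) (by omega) hthird⟩
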